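/- For $F(u) = \frac{1}{4}u^2(1-u)^2$, $F_i(u) = \frac{3}{8}u^2$, $F_e(u) = \frac{1}{4}u^4 - \frac{1}{2}u^3 - \frac{1}{8}u^2$, and $f(a,b) = F_i'(a) + F_e'(b) = \frac{1}{4}(3a + 4b^3 - 6b^2 - b)$, it holds that $F(a) - F(b) \le f(a,b)(a-b)$ for all $a, b \in [0,1]$. -/

import Mathlib

/-!
Split `F = Fᵢ + Fₑ` with `Fᵢ(u) = 3u²/8` convex and `Fₑ(u) = u⁴/4 - u³/2 - u²/8` concave on `[0, 1]`
(there `Fₑ'' = 3u² - 3u - 1/4 ≤ -1/4`). Treating the convex part implicitly and the concave part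
explicitly, each part lies below its tangent line at the implicit resp. explicit point:
`Fᵢ(a) - Fᵢ(b) ≤ Fᵢ'(a) (a - b)` and `Fₑ(a) - Fₑ(b) ≤ Fₑ'(b) (a - b)`. Adding gives the inequality.
-/

open Set

section TangentLine

variable {S : Set ℝ} {f : ℝ → ℝ} {f' a b : ℝ}

theorem ConvexOn.sub_le_mul_sub_of_hasDerivAt (hf : ConvexOn ℝ S f) (ha : a ∈ S) (hb : b ∈ S)
    (hf' : HasDerivAt f f' a) : f a - f b ≤ f' * (a - b) := by
  rcases lt_trichotomy a b with hab | rfl | hab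
  · have := hf.le_slope_of_hasDerivAt ha hb hab hf'
    rw [slope_def_field, le_div_iff₀ (sub_pos.2 hab)] at this
    linarith
  · simp
  · have := hf.slope_le_of_hasDerivAt hb ha hab hf'
    rw [slope_def_field, div_le_iff₀ (sub_pos.2 hab)] at this
    linarith

theorem ConcaveOn.sub_le_mul_sub_of_hasDerivAt (hf : ConcaveOn ℝ S f) (ha : a ∈ S) (hb : b ∈ S)
    (hf' : HasDerivAt f f' b) : f a - f b ≤ f' * (a - b) := by
  have := hf.neg.sub_le_mul_sub_of_hasDerivAt hb ha hf'.neg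
  simp only [Pi.neg_apply] at this
  linarith

end TangentLine

theorem ConvexOn.add_sub_add_le_mul_sub {S : Set ℝ} {g h : ℝ → ℝ} {g' h' a b : ℝ}
    (hg : ConvexOn ℝ S g) (hh : ConcaveOn ℝ S h) (ha : a ∈ S) (hb : b ∈ S)
    (hg' : HasDerivAt g g' a) (hh' : HasDerivAt h h' b) :
    (g a + h a) - (g b + h b) ≤ (g' + h') * (a - b) := by
  have hgab := hg.sub_le_mul_sub_of_hasDerivAt ha hb hg'
  have hhab := hh.sub_le_mul_sub_of_hasDerivAt ha hb hh'
  linarith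

namespace DoubleWell

noncomputable def convexPart (u : ℝ) : ℝ := 3 / 8 * u ^ 2

noncomputable def concavePart (u : ℝ) : ℝ := u ^ 4 / 4 - u ^ 3 / 2 - u ^ 2 / 8

theorem convexPart_add_concavePart (u : ℝ) :
    convexPart u + concavePart u = u ^ 2 * (1 - u) ^ 2 / 4 := by
  unfold convexPart concavePart
  ring

theorem hasDerivAt_convexPart (u : ℝ) : HasDerivAt convexPart (3 / 4 * u) u := by
  unfold convexPart
  refine ((hasDerivAt_pow 2 u).const_mul (3 / 8 : ℝ)).congr_deriv ?_
  norm_num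
  ring

theorem hasDerivAt_concavePart (u : ℝ) :
    HasDerivAt concavePart (u ^ 3 - 3 / 2 * u ^ 2 - 1 / 4 * u) u := by
  unfold concavePart
  refine ((((hasDerivAt_pow 4 u).div_const 4).sub ((hasDerivAt_pow 3 u).div_const 2)).sub
    ((hasDerivAt_pow 2 u).div_const 8)).congr_deriv ?_
  norm_num
  ring

theorem convexOn_convexPart : ConvexOn ℝ univ convexPart := by
  unfold convexPart
  simpa only [smul_eq_mul] using
    (even_two.convexOn_pow (𝕜 := ℝ)).smul (by norm_num : (0 : ℝ) ≤ 3 / 8)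

theorem concaveOn_concavePart : ConcaveOn ℝ (Icc 0 1) concavePart := by
  have hderiv2 (u : ℝ) : HasDerivAt (fun u ↦ u ^ 3 - 3 / 2 * u ^ 2 - 1 / 4 * u)
      (3 * u ^ 2 - 3 * u - 1 / 4) u := by
    refine (((hasDerivAt_pow 3 u).sub ((hasDerivAt_pow 2 u).const_mul (3 / 2 : ℝ))).sub
      ((hasDerivAt_id' u).const_mul (1 / 4 : ℝ))).congr_deriv ?_
    norm_num
    ring
  refine concaveOn_of_hasDerivWithinAt2_nonpos (convex_Icc 0 1)
    (fun u _ ↦ (hasDerivAt_concavePart u).continuousAt.continuousWithinAt)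
    (fun u _ ↦ (hasDerivAt_concavePart u).hasDerivWithinAt)
    (fun u _ ↦ (hderiv2 u).hasDerivWithinAt) ?_
  rw [interior_Icc]
  rintro u ⟨hu0, hu1⟩
  nlinarith

end DoubleWell

/-- Convex-splitting inequality for the Ginzburg--Landau double-well potential
`F(u) = u^2 (1-u)^2 / 4` with splitting approximation
`f(a,b) = (3a + 4b^3 - 6b^2 - b)/4`: for all `a, b ∈ [0,1]`,
`F(a) - F(b) ≤ f(a,b) (a - b)`. -/
theorem double_well_convex_splitting_inequality :
    ∀ a ∈ Set.Icc (0 : ℝ) 1, ∀ b ∈ Set.Icc (0 : ℝ) 1,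
      a ^ 2 * (1 - a) ^ 2 / 4 - b ^ 2 * (1 - b) ^ 2 / 4 ≤
        (3 * a + 4 * b ^ 3 - 6 * b ^ 2 - b) / 4 * (a - b) := by
  intro a ha b hb
  have hconvex := DoubleWell.convexOn_convexPart.subset (subset_univ _) (convex_Icc 0 1)
  have := hconvex.add_sub_add_le_mul_sub DoubleWell.concaveOn_concavePart ha hb
    (DoubleWell.hasDerivAt_convexPart a) (DoubleWell.hasDerivAt_concavePart b)
  rw [DoubleWell.convexPart_add_concavePart, DoubleWell.convexPart_add_concavePart] at this
  convert this using 2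
  ring
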